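/- arXiv:2307.10562 — 5 statements merged into one kernel-verified Lean document; each statement's English description precedes it below -/
import Mathlib

section
/- For additive fixed-trigger attacks (g(x,Δ)=x+Δ, Δ∈S), the chain R_bd(h_θ) ≤ R_usub(h_θ) ≤ R_uadv(h_θ) ≤ R_adv(h_θ) holds, where R_usub is the universal sub-adversarial risk combining shared universal adversarial examples on D_s and vanilla universal adversarial examples on D_{-ŷ}\D_s. -/
private theorem div_le_div_of_nonneg_right' {a b c : ℝ} (hab : a ≤ b) (hc : 0 ≤ c) :
    a / c ≤ b / c := by
  rcases eq_or_lt_of_le hc with rfl | hc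
  · simp
  · exact div_le_div_of_nonneg_right hab hc.le

/-- for additive fixed-trigger attacks (`g x = x + Δ`, `Δ ∈ S`),
`R_bd(h) ≤ R_usub(h) ≤ R_uadv(h) ≤ R_adv(h)`, where `R_usub` is the universal
sub-adversarial risk combining shared universal adversarial examples on
`D_s = {(x,y) ∈ D_{-yt} : hbd (x + Δ) = yt}` and vanilla universal adversarial examples
on `D_{-yt} \ D_s`. -/
theorem backdoor_le_usub_le_uadv_le_adv
    {X Y : Type*} [Add X] [DecidableEq Y]
    (D : Finset (X × Y)) (S : Finset X) (hSne : S.Nonempty)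
    (h hbd : X → Y) (Δ : X) (yt : Y) (hΔ : Δ ∈ S) :
    ((∑ p ∈ D, if h (p.1 + Δ) = yt ∧ p.2 ≠ yt then (1 : ℝ) else 0)
        / ((D.filter (fun p => p.2 ≠ yt)).card : ℝ)
      ≤ (S.sup' hSne (fun ε => D.sum fun (p : X × Y) =>
            (if h (p.1 + ε) = hbd (p.1 + ε) ∧ h (p.1 + ε) ≠ p.2
                ∧ p.2 ≠ yt ∧ hbd (p.1 + Δ) = yt then (1 : ℝ) else 0)
            + (if h (p.1 + ε) ≠ p.2 ∧ p.2 ≠ yt ∧ hbd (p.1 + Δ) ≠ yt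
                then (1 : ℝ) else 0)))
        / ((D.filter (fun p => p.2 ≠ yt)).card : ℝ))
    ∧
    ((S.sup' hSne (fun ε => D.sum fun (p : X × Y) =>
          (if h (p.1 + ε) = hbd (p.1 + ε) ∧ h (p.1 + ε) ≠ p.2
              ∧ p.2 ≠ yt ∧ hbd (p.1 + Δ) = yt then (1 : ℝ) else 0)
          + (if h (p.1 + ε) ≠ p.2 ∧ p.2 ≠ yt ∧ hbd (p.1 + Δ) ≠ yt
              then (1 : ℝ) else 0)))
        / ((D.filter (fun p => p.2 ≠ yt)).card : ℝ)
      ≤ (S.sup' hSne (fun ε =>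
            ∑ p ∈ D, if h (p.1 + ε) ≠ p.2 ∧ p.2 ≠ yt then (1 : ℝ) else 0))
        / ((D.filter (fun p => p.2 ≠ yt)).card : ℝ))
    ∧
    ((S.sup' hSne (fun ε =>
          ∑ p ∈ D, if h (p.1 + ε) ≠ p.2 ∧ p.2 ≠ yt then (1 : ℝ) else 0))
        / ((D.filter (fun p => p.2 ≠ yt)).card : ℝ)
      ≤ (∑ p ∈ D, S.sup' hSne (fun ε =>
            if h (p.1 + ε) ≠ p.2 ∧ p.2 ≠ yt then (1 : ℝ) else 0))
        / ((D.filter (fun p => p.2 ≠ yt)).card : ℝ)) := by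

  have hdiv : ∀ a b : ℝ, a ≤ b →
      a / ((D.filter (fun p => p.2 ≠ yt)).card : ℝ)
        ≤ b / ((D.filter (fun p => p.2 ≠ yt)).card : ℝ) := by
    intro a b hab
    exact div_le_div_of_nonneg_right' hab (Nat.cast_nonneg _)
  refine ⟨hdiv _ _ ?_, hdiv _ _ ?_, hdiv _ _ ?_⟩
  · refine le_trans ?_ (Finset.le_sup' (fun ε => D.sum fun (p : X × Y) =>
        (if h (p.1 + ε) = hbd (p.1 + ε) ∧ h (p.1 + ε) ≠ p.2
            ∧ p.2 ≠ yt ∧ hbd (p.1 + Δ) = yt then (1 : ℝ) else 0)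
        + (if h (p.1 + ε) ≠ p.2 ∧ p.2 ≠ yt ∧ hbd (p.1 + Δ) ≠ yt
            then (1 : ℝ) else 0)) hΔ)
    apply Finset.sum_le_sum
    intro p _
    by_cases hb : hbd (p.1 + Δ) = yt <;> split_ifs with h1 h2 h3 <;>
      simp_all <;> norm_num <;> tauto
  · apply Finset.sup'_le
    intro ε hε
    refine le_trans ?_ (Finset.le_sup' (fun ε =>
        ∑ p ∈ D, if h (p.1 + ε) ≠ p.2 ∧ p.2 ≠ yt then (1 : ℝ) else 0) hε)
    apply Finset.sum_le_sum
    intro p _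
    split_ifs with h1 h2 h3 <;> simp_all <;> norm_num <;> tauto
  · apply Finset.sup'_le
    intro ε hε
    apply Finset.sum_le_sum
    intro p _
    exact Finset.le_sup' (fun ε => if h (p.1 + ε) ≠ p.2 ∧ p.2 ≠ yt then (1 : ℝ) else 0) hε
end

section
/- Under the trigger-containment assumption, the targeted sub-adversarial risk satisfies R_bd(h_θ) ≤ R_tsub(h_θ) ≤ R_tadv(h_θ) ≤ R_adv(h_θ). -/
private lemma div_le_div_nonneg {a b c : ℝ} (h : a ≤ b) (hc : 0 ≤ c) :
    a / c ≤ b / c := by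
  rcases eq_or_lt_of_le hc with rfl | hc
  · simp
  · exact div_le_div_of_nonneg_right h hc.le

/-- under trigger containment,
`R_bd(h) ≤ R_tsub(h) ≤ R_tadv(h) ≤ R_adv(h)`, where the targeted sub-adversarial risk
`R_tsub` uses shared targeted adversarial examples (`h = hbd = yt`) on
`D_s = {(x,y) ∈ D_{-yt} : hbd (g x) = yt}` and targeted adversarial examples on
`D_{-yt} \ D_s`. -/
theorem backdoor_le_tsub_le_tadv_le_adv
    {X Y : Type*} [Add X] [DecidableEq Y]
    (D : Finset (X × Y)) (S : Finset X) (hSne : S.Nonempty)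
    (h hbd : X → Y) (g : X → X) (yt : Y)
    (hS : ∀ p ∈ D, ∃ ε ∈ S, p.1 + ε = g p.1) :
    ((∑ p ∈ D.filter (fun p => p.2 ≠ yt), if h (g p.1) = yt then (1 : ℝ) else 0)
        / ((D.filter (fun p => p.2 ≠ yt)).card : ℝ)
      ≤ (∑ p ∈ D.filter (fun p => p.2 ≠ yt), S.sup' hSne (fun ε =>
            (if hbd (g p.1) = yt ∧ h (p.1 + ε) = yt ∧ hbd (p.1 + ε) = yt
              then (1 : ℝ) else 0)
            + (if hbd (g p.1) ≠ yt ∧ h (p.1 + ε) = yt then (1 : ℝ) else 0)))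
        / ((D.filter (fun p => p.2 ≠ yt)).card : ℝ))
    ∧
    ((∑ p ∈ D.filter (fun p => p.2 ≠ yt), S.sup' hSne (fun ε =>
          (if hbd (g p.1) = yt ∧ h (p.1 + ε) = yt ∧ hbd (p.1 + ε) = yt
            then (1 : ℝ) else 0)
          + (if hbd (g p.1) ≠ yt ∧ h (p.1 + ε) = yt then (1 : ℝ) else 0)))
        / ((D.filter (fun p => p.2 ≠ yt)).card : ℝ)
      ≤ (∑ p ∈ D.filter (fun p => p.2 ≠ yt), S.sup' hSne (fun ε =>
            if h (p.1 + ε) = yt then (1 : ℝ) else 0))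
        / ((D.filter (fun p => p.2 ≠ yt)).card : ℝ))
    ∧
    ((∑ p ∈ D.filter (fun p => p.2 ≠ yt), S.sup' hSne (fun ε =>
          if h (p.1 + ε) = yt then (1 : ℝ) else 0))
        / ((D.filter (fun p => p.2 ≠ yt)).card : ℝ)
      ≤ (∑ p ∈ D.filter (fun p => p.2 ≠ yt), S.sup' hSne (fun ε =>
            if h (p.1 + ε) ≠ p.2 then (1 : ℝ) else 0))
        / ((D.filter (fun p => p.2 ≠ yt)).card : ℝ)) := by
  have hcard : (0 : ℝ) ≤ ((D.filter (fun p => p.2 ≠ yt)).card : ℝ) := Nat.cast_nonneg _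
  refine ⟨div_le_div_nonneg (Finset.sum_le_sum ?_) hcard,
          div_le_div_nonneg (Finset.sum_le_sum ?_) hcard,
          div_le_div_nonneg (Finset.sum_le_sum ?_) hcard⟩
  · intro p hp
    have hpD : p ∈ D := (Finset.mem_filter.1 hp).1
    obtain ⟨ε, hε, hεg⟩ := hS p hpD
    refine le_trans ?_ (Finset.le_sup' _ hε)
    rw [hεg]
    by_cases h1 : h (g p.1) = yt
    · by_cases h2 : hbd (g p.1) = yt <;> simp [h1, h2]
    · simp [h1]
  · intro p hp
    apply Finset.sup'_le
    intro ε hε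
    refine le_trans ?_ (Finset.le_sup' (fun ε => if h (p.1 + ε) = yt then (1:ℝ) else 0) hε)
    by_cases h1 : h (p.1 + ε) = yt
    · by_cases h2 : hbd (g p.1) = yt <;> simp [h1, h2]
      by_cases h3 : hbd (p.1 + ε) = yt <;> simp [h3]
    · simp [h1]
  · intro p hp
    have hpy : p.2 ≠ yt := (Finset.mem_filter.1 hp).2
    apply Finset.sup'_le
    intro ε hε
    refine le_trans ?_ (Finset.le_sup' (fun ε => if h (p.1 + ε) ≠ p.2 then (1:ℝ) else 0) hε)
    by_cases h1 : h (p.1 + ε) = yt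
    · simp [h1, Ne.symm hpy]
    · simp [h1]
      positivity
end

section
/- The targeted sub-adversarial risk is a tighter upper bound than the untargeted sub-adversarial risk: under the trigger-containment assumption, R_bd(h_θ) ≤ R_tsub(h_θ) ≤ R_sub(h_θ) ≤ R_adv(h_θ). -/
lemma ite_le_ite_aux {P Q : Prop} [Decidable P] [Decidable Q] (hpq : P → Q) :
    (if P then (1:ℝ) else 0) ≤ if Q then (1:ℝ) else 0 := by
  split_ifs with h1 h2 <;> simp_all

/-- under trigger containment,
`R_bd(h) ≤ R_tsub(h) ≤ R_sub(h) ≤ R_adv(h)`: the targeted sub-adversarial risk is a tighter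
upper bound than the untargeted sub-adversarial risk. -/
theorem backdoor_le_tsub_le_sub_le_adv
    {X Y : Type*} [Add X] [DecidableEq Y]
    (D : Finset (X × Y)) (S : Finset X) (hSne : S.Nonempty)
    (h hbd : X → Y) (g : X → X) (yt : Y)
    (hS : ∀ p ∈ D, ∃ ε ∈ S, p.1 + ε = g p.1) :
    ((∑ p ∈ D.filter (fun p => p.2 ≠ yt), if h (g p.1) = yt then (1 : ℝ) else 0)
        / ((D.filter (fun p => p.2 ≠ yt)).card : ℝ)
      ≤ (∑ p ∈ D.filter (fun p => p.2 ≠ yt), S.sup' hSne (fun ε =>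
            (if hbd (g p.1) = yt ∧ h (p.1 + ε) = yt ∧ hbd (p.1 + ε) = yt
              then (1 : ℝ) else 0)
            + (if hbd (g p.1) ≠ yt ∧ h (p.1 + ε) = yt then (1 : ℝ) else 0)))
        / ((D.filter (fun p => p.2 ≠ yt)).card : ℝ))
    ∧
    ((∑ p ∈ D.filter (fun p => p.2 ≠ yt), S.sup' hSne (fun ε =>
          (if hbd (g p.1) = yt ∧ h (p.1 + ε) = yt ∧ hbd (p.1 + ε) = yt
            then (1 : ℝ) else 0)
          + (if hbd (g p.1) ≠ yt ∧ h (p.1 + ε) = yt then (1 : ℝ) else 0)))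
        / ((D.filter (fun p => p.2 ≠ yt)).card : ℝ)
      ≤ (∑ p ∈ D.filter (fun p => p.2 ≠ yt), S.sup' hSne (fun ε =>
            (if hbd (g p.1) = yt ∧ h (p.1 + ε) = hbd (p.1 + ε) ∧ h (p.1 + ε) ≠ p.2
              then (1 : ℝ) else 0)
            + (if hbd (g p.1) ≠ yt ∧ h (p.1 + ε) ≠ p.2 then (1 : ℝ) else 0)))
        / ((D.filter (fun p => p.2 ≠ yt)).card : ℝ))
    ∧
    ((∑ p ∈ D.filter (fun p => p.2 ≠ yt), S.sup' hSne (fun ε =>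
          (if hbd (g p.1) = yt ∧ h (p.1 + ε) = hbd (p.1 + ε) ∧ h (p.1 + ε) ≠ p.2
            then (1 : ℝ) else 0)
          + (if hbd (g p.1) ≠ yt ∧ h (p.1 + ε) ≠ p.2 then (1 : ℝ) else 0)))
        / ((D.filter (fun p => p.2 ≠ yt)).card : ℝ)
      ≤ (∑ p ∈ D.filter (fun p => p.2 ≠ yt), S.sup' hSne (fun ε =>
            if h (p.1 + ε) ≠ p.2 then (1 : ℝ) else 0))
        / ((D.filter (fun p => p.2 ≠ yt)).card : ℝ)) := by
  set Df := D.filter (fun p => p.2 ≠ yt) with hDf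
  have hdiv : ∀ a b : ℝ, a ≤ b → a / (Df.card : ℝ) ≤ b / (Df.card : ℝ) := by
    intro a b hab
    exact div_le_div_of_nonneg_right hab (Nat.cast_nonneg _)
  refine ⟨?_, ?_, ?_⟩
  · apply hdiv
    apply Finset.sum_le_sum
    intro p hp
    obtain ⟨ε, hε, hεeq⟩ := hS p (Finset.mem_filter.mp hp).1
    refine le_trans ?_ (Finset.le_sup' _ hε)
    rw [hεeq]
    by_cases hh : h (g p.1) = yt
    · by_cases hb : hbd (g p.1) = yt <;> simp [hh, hb]
    · simp only [hh, if_neg (by simp [hh] : ¬(hbd (g p.1) = yt ∧ h (g p.1) = yt ∧ hbd (g p.1) = yt)), if_neg (by simp [hh] : ¬(hbd (g p.1) ≠ yt ∧ h (g p.1) = yt)), add_zero, if_false]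
      positivity
  · apply hdiv
    apply Finset.sum_le_sum
    intro p hp
    have hpy : p.2 ≠ yt := (Finset.mem_filter.mp hp).2
    apply Finset.sup'_mono_fun
    intro ε hε
    gcongr
    · apply ite_le_ite_aux
      intro hc
      exact ⟨hc.1, hc.2.1.trans hc.2.2.symm, by rw [hc.2.1]; exact fun e => hpy e.symm⟩
    · apply ite_le_ite_aux
      intro hc
      exact ⟨hc.1, by rw [hc.2]; exact fun e => hpy e.symm⟩
  · apply hdiv
    apply Finset.sum_le_sum
    intro p hp
    apply Finset.sup'_mono_fun
    intro ε hε
    by_cases hb : hbd (g p.1) = yt <;> by_cases hn : h (p.1 + ε) = p.2 <;>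
      simp [hb, hn] <;> split <;> norm_num
end

section
/- In the multi-trigger/multi-target setting, where each sample x has a set T(x) of feasible trigger-target pairs with g(x,Δ) − x ∈ S for all (Δ,ŷ) ∈ T(x), the maximum backdoor risk over feasible trigger-target pairs is bounded above by the multi-target sub-adversarial risk R_sub, which in turn is bounded above by the vanilla adversarial risk R_adv over the full clean dataset. -/
/-- multi-trigger/multi-target setting. Each sample `x` has a nonempty set
`T x` of feasible trigger-target pairs `(Δ, yt)` with `g x Δ - x ∈ S`. With
`D_s = {x ∈ D : ∀ (Δ, yt) ∈ T x, hbd (g x Δ) = yt ≠ y}`, the maximum backdoor risk is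
bounded by the multi-target sub-adversarial risk, which is bounded by the vanilla adversarial
risk over the full clean dataset. -/
theorem multi_backdoor_le_sub_le_adv
    {X Y : Type*} [Add X] [DecidableEq Y]
    (D : Finset (X × Y)) (S : Finset X) (hSne : S.Nonempty)
    (h hbd : X → Y) (g : X → X → X) (T : X → Finset (X × Y))
    (hT : ∀ x, (T x).Nonempty)
    (hS : ∀ p ∈ D, ∀ q ∈ T p.1, ∃ ε ∈ S, p.1 + ε = g p.1 q.1) :
    ((∑ p ∈ D, (T p.1).sup' (hT p.1) (fun q =>
          if h (g p.1 q.1) = q.2 ∧ q.2 ≠ p.2 then (1 : ℝ) else 0))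
        / (D.card : ℝ)
      ≤ (∑ p ∈ D, S.sup' hSne (fun ε =>
            (if h (p.1 + ε) = hbd (p.1 + ε) ∧ h (p.1 + ε) ≠ p.2
                ∧ (∀ q ∈ T p.1, hbd (g p.1 q.1) = q.2 ∧ q.2 ≠ p.2)
              then (1 : ℝ) else 0)
            + (if h (p.1 + ε) ≠ p.2
                ∧ ¬ (∀ q ∈ T p.1, hbd (g p.1 q.1) = q.2 ∧ q.2 ≠ p.2)
              then (1 : ℝ) else 0)))
        / (D.card : ℝ))
    ∧
    ((∑ p ∈ D, S.sup' hSne (fun ε =>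
          (if h (p.1 + ε) = hbd (p.1 + ε) ∧ h (p.1 + ε) ≠ p.2
              ∧ (∀ q ∈ T p.1, hbd (g p.1 q.1) = q.2 ∧ q.2 ≠ p.2)
            then (1 : ℝ) else 0)
          + (if h (p.1 + ε) ≠ p.2
              ∧ ¬ (∀ q ∈ T p.1, hbd (g p.1 q.1) = q.2 ∧ q.2 ≠ p.2)
            then (1 : ℝ) else 0)))
        / (D.card : ℝ)
      ≤ (∑ p ∈ D, S.sup' hSne (fun ε =>
            if h (p.1 + ε) ≠ p.2 then (1 : ℝ) else 0))
        / (D.card : ℝ)) := by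

  have hcard : (0:ℝ) ≤ ((D.card:ℝ))⁻¹ := by positivity
  constructor
  · rw [div_eq_mul_inv, div_eq_mul_inv]
    refine mul_le_mul_of_nonneg_right (Finset.sum_le_sum ?_) hcard
    intro p hp
    apply Finset.sup'_le
    intro q hq
    by_cases hcond : h (g p.1 q.1) = q.2 ∧ q.2 ≠ p.2
    · obtain ⟨ε, hεS, hε⟩ := hS p hp q hq
      refine le_trans ?_ (Finset.le_sup' _ hεS)
      rw [if_pos hcond, hε]
      have hne : h (g p.1 q.1) ≠ p.2 := by rw [hcond.1]; exact hcond.2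
      by_cases hC : ∀ r ∈ T p.1, hbd (g p.1 r.1) = r.2 ∧ r.2 ≠ p.2
      · have heq : h (g p.1 q.1) = hbd (g p.1 q.1) := by
          rw [hcond.1, (hC q hq).1]
        rw [if_pos ⟨heq, hne, hC⟩, if_neg (by tauto)]
        norm_num
      · rw [if_neg (by tauto), if_pos ⟨hne, hC⟩]
        norm_num
    · rw [if_neg hcond]
      obtain ⟨ε, hεS⟩ := hSne
      refine le_trans ?_ (Finset.le_sup' _ hεS)
      positivity
  · rw [div_eq_mul_inv, div_eq_mul_inv]
    refine mul_le_mul_of_nonneg_right (Finset.sum_le_sum ?_) hcard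
    intro p hp
    apply Finset.sup'_le
    intro ε hεS
    refine le_trans ?_ (Finset.le_sup' _ hεS)
    split_ifs <;> norm_num <;> tauto
end

section
/- Let R₁ be the relaxation of R_sub obtained by replacing D_s with D_{-ŷ} (counting shared adversarial examples on all of D_{-ŷ}). Then the relaxation gap satisfies R_sub(h_θ) − R₁(h_θ) ≤ 1 − R_bd(h_{θ_bd}), i.e., the gap is bounded by one minus the attack success rate of the backdoored model itself. -/
/-- the relaxation gap from replacing `D_s` by `D_{-yt}` satisfies
`R_sub(h) - R₁(h) ≤ 1 - R_bd(hbd)`, where `R_bd(hbd) = |D_s| / |D_{-yt}|` is the backdoored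
model's own attack success rate, `R₁` counts shared adversarial examples on all of
`D_{-yt}`, and `D_s = {(x,y) ∈ D_{-yt} : hbd (g x) = yt}`. -/
theorem relaxation_gap_bound
    {X Y : Type*} [Add X] [DecidableEq Y]
    (D : Finset (X × Y)) (S : Finset X) (hSne : S.Nonempty)
    (h hbd : X → Y) (g : X → X) (yt : Y)
    (hne : (D.filter (fun p => p.2 ≠ yt)).Nonempty) :
    (∑ p ∈ D.filter (fun p => p.2 ≠ yt), S.sup' hSne (fun ε =>
        (if hbd (g p.1) = yt ∧ h (p.1 + ε) = hbd (p.1 + ε) ∧ h (p.1 + ε) ≠ p.2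
          then (1 : ℝ) else 0)
        + (if hbd (g p.1) ≠ yt ∧ h (p.1 + ε) ≠ p.2 then (1 : ℝ) else 0)))
      / ((D.filter (fun p => p.2 ≠ yt)).card : ℝ)
    - (∑ p ∈ D.filter (fun p => p.2 ≠ yt), S.sup' hSne (fun ε =>
        if h (p.1 + ε) = hbd (p.1 + ε) ∧ h (p.1 + ε) ≠ p.2 then (1 : ℝ) else 0))
      / ((D.filter (fun p => p.2 ≠ yt)).card : ℝ)
    ≤ 1 - ((D.filter (fun p => p.2 ≠ yt ∧ hbd (g p.1) = yt)).card : ℝ)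
        / ((D.filter (fun p => p.2 ≠ yt)).card : ℝ) := by
  set T := D.filter (fun p => p.2 ≠ yt) with hT
  have hn : (0 : ℝ) < (T.card : ℝ) := by
    exact_mod_cast Finset.card_pos.mpr hne
  rw [div_sub_div_same]
  have key : ∀ p ∈ T,
      S.sup' hSne (fun ε =>
        (if hbd (g p.1) = yt ∧ h (p.1 + ε) = hbd (p.1 + ε) ∧ h (p.1 + ε) ≠ p.2
          then (1 : ℝ) else 0)
        + (if hbd (g p.1) ≠ yt ∧ h (p.1 + ε) ≠ p.2 then (1 : ℝ) else 0))
      - S.sup' hSne (fun ε =>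
        if h (p.1 + ε) = hbd (p.1 + ε) ∧ h (p.1 + ε) ≠ p.2 then (1 : ℝ) else 0)
      ≤ (if hbd (g p.1) = yt then 0 else 1) := by
    intro p _
    by_cases hc : hbd (g p.1) = yt
    · have heq : (fun ε =>
          (if hbd (g p.1) = yt ∧ h (p.1 + ε) = hbd (p.1 + ε) ∧ h (p.1 + ε) ≠ p.2
            then (1 : ℝ) else 0)
          + (if hbd (g p.1) ≠ yt ∧ h (p.1 + ε) ≠ p.2 then (1 : ℝ) else 0))
          = (fun ε => if h (p.1 + ε) = hbd (p.1 + ε) ∧ h (p.1 + ε) ≠ p.2 then (1 : ℝ) else 0) := by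
        funext ε
        simp [hc]
      rw [heq, if_pos hc, sub_self]
    · rw [if_neg hc]
      have h1 : S.sup' hSne (fun ε =>
          (if hbd (g p.1) = yt ∧ h (p.1 + ε) = hbd (p.1 + ε) ∧ h (p.1 + ε) ≠ p.2
            then (1 : ℝ) else 0)
          + (if hbd (g p.1) ≠ yt ∧ h (p.1 + ε) ≠ p.2 then (1 : ℝ) else 0)) ≤ 1 := by
        apply Finset.sup'_le
        intro ε _
        simp only [hc]
        split <;> split <;> norm_num <;> simp_all
      have h2 : (0 : ℝ) ≤ S.sup' hSne (fun ε =>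
          if h (p.1 + ε) = hbd (p.1 + ε) ∧ h (p.1 + ε) ≠ p.2 then (1 : ℝ) else 0) := by
        obtain ⟨ε, hε⟩ := hSne
        refine le_trans ?_ (Finset.le_sup' _ hε)
        split <;> norm_num
      linarith
  have hsum : (∑ p ∈ T, S.sup' hSne (fun ε =>
        (if hbd (g p.1) = yt ∧ h (p.1 + ε) = hbd (p.1 + ε) ∧ h (p.1 + ε) ≠ p.2
          then (1 : ℝ) else 0)
        + (if hbd (g p.1) ≠ yt ∧ h (p.1 + ε) ≠ p.2 then (1 : ℝ) else 0)))
      - (∑ p ∈ T, S.sup' hSne (fun ε =>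
        if h (p.1 + ε) = hbd (p.1 + ε) ∧ h (p.1 + ε) ≠ p.2 then (1 : ℝ) else 0))
      ≤ ∑ p ∈ T, (if hbd (g p.1) = yt then (0:ℝ) else 1) := by
    rw [← Finset.sum_sub_distrib]
    exact Finset.sum_le_sum key
  have hcard : ∑ p ∈ T, (if hbd (g p.1) = yt then (0:ℝ) else 1)
      = (T.card : ℝ) - ((D.filter (fun p => p.2 ≠ yt ∧ hbd (g p.1) = yt)).card : ℝ) := by
    have : (D.filter (fun p => p.2 ≠ yt ∧ hbd (g p.1) = yt))
        = T.filter (fun p => hbd (g p.1) = yt) := by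
      rw [hT, Finset.filter_filter]
    rw [this]
    have h2 : ∑ p ∈ T, (if hbd (g p.1) = yt then (0:ℝ) else 1)
        = ((T.filter (fun p => ¬ hbd (g p.1) = yt)).card : ℝ) := by
      rw [Finset.sum_ite, Finset.sum_const, Finset.sum_const]
      simp
    rw [h2]
    have h3 := Finset.card_filter_add_card_filter_not
      (s := T) (p := fun p => hbd (g p.1) = yt)
    push_cast [← h3]
    ring
  rw [hcard] at hsum
  have hrhs : 1 - ((D.filter (fun p => p.2 ≠ yt ∧ hbd (g p.1) = yt)).card : ℝ) / (T.card : ℝ)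
      = ((T.card : ℝ) - ((D.filter (fun p => p.2 ≠ yt ∧ hbd (g p.1) = yt)).card : ℝ)) / (T.card : ℝ) := by
    field_simp
  rw [hrhs, div_le_div_iff_of_pos_right hn]
  exact hsum
end
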